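/- Let w be an infinite non-ultimately periodic word, u ∈ Π_γ(w) primitive, and (w⃗, z⃗, d⃗) = factrz(w,u) its run factorization w = w1 z1^{d1} w2 z2^{d2} ⋯. For every k ≥ 1 the word w_k satisfies |w_k| > |u|. -/

import Mathlib

open scoped BigOperators

variable {α : Type*}

/-- The factor of the infinite word `w` (1-indexed) from position `i` to position `j`. -/
def Subword (w : ℕ → α) (i j : ℕ) : List α :=
  (List.range (j + 1 - i)).map fun n => w (i + n)

/-- `t` is a finite factor of the infinite word `w` (positions are 1-indexed). -/
def IsFactorI (w : ℕ → α) (t : List α) : Prop :=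
  ∃ i, 1 ≤ i ∧ t = (List.range t.length).map fun n => w (i + n)

/-- `t` occurs infinitely often in the infinite word `w`. -/
def RecurrentI (w : ℕ → α) (t : List α) : Prop :=
  ∀ N, ∃ i, N ≤ i ∧ t = (List.range t.length).map fun n => w (i + n)

/-- The infinite word `w` is ultimately periodic. -/
def UltimatelyPeriodic (w : ℕ → α) : Prop :=
  ∃ p N, 1 ≤ p ∧ ∀ n, N ≤ n → w (n + p) = w n

/-- The `q`-power `u^q` of a finite word `u`, for a rational exponent `q ≥ 1`:
`u^⌊q⌋` followed by the prefix of `u` of length `(q - ⌊q⌋)·|u|`. -/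
def fracPow (u : List α) (q : ℚ) : List α :=
  (List.replicate ⌊q⌋.toNat u).flatten ++
    u.take (⌊q * (u.length : ℚ)⌋.toNat - ⌊q⌋.toNat * u.length)

/-- A nonempty word is primitive if it is not a (possibly fractional) `q`-power,
`q ≥ 2`, of any word. -/
def Primitive (v : List α) : Prop :=
  v ≠ [] ∧ ∀ (t : List α) (q : ℚ), 2 ≤ q → v ≠ fracPow t q

/-- `PowFactor u`: finite factors of `u^∞` together with finite factors of `(u^R)^∞`. -/
def IsPowFactor (u t : List α) : Prop :=
  (∃ k, t <:+: (List.replicate k u).flatten) ∨ (∃ k, t <:+: (List.replicate k u.reverse).flatten)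

/-- `(i,j)` is a `u`-run of the infinite word `w` (with the fixed parameter `γ`). -/
def IsRun (γ : ℕ) (w : ℕ → α) (u : List α) (i j : ℕ) : Prop :=
  i < j ∧ (γ - 2) * u.length ≤ j - i + 1 ∧ u.length + 1 < i ∧
  IsPowFactor u (Subword w (i - u.length) (j + u.length)) ∧
  ¬ IsPowFactor u (Subword w (i - u.length - 1) (j + u.length)) ∧
  ¬ IsPowFactor u (Subword w (i - u.length) (j + u.length + 1))

/-- Membership in the set `Π_γ(w)`. -/
def InPi (γ : ℕ) (w : ℕ → α) (u : List α) : Prop :=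
  Primitive u ∧ IsFactorI w u ∧
  ¬ IsPowFactor u ((List.range (γ * u.length)).map fun n => w (1 + n)) ∧
  ∃ v : List α, v.length = u.length ∧ IsPowFactor u v ∧
    RecurrentI w ((List.replicate γ v).flatten)

/-- Palindromic length: the minimal number of nonempty palindromes whose
concatenation equals `v`. -/
noncomputable def PL (v : List α) : ℕ :=
  sInf {k | ∃ ps : List (List α), ps.flatten = v ∧ ps.length = k ∧
    ∀ p ∈ ps, p ≠ [] ∧ p.reverse = p}

/-- `maxPL v`: the maximum of `PL` over the factors of `v`. -/
noncomputable def maxPL (v : List α) : ℕ :=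
  sSup {n | ∃ t, t <:+: v ∧ n = PL t}

/-- `(I, J, W, Z, D)` is the run factorization `factrz(w,u)` of `w`:
`(I k, J k)` enumerates the `u`-runs in increasing order, `W k` is the inter-run
factor, and `w[I k, J k] = (Z k)^(D k)`. -/
structure IsFactrz (γ : ℕ) (w : ℕ → α) (u : List α)
    (I J : ℕ → ℕ) (W Z : ℕ → List α) (D : ℕ → ℚ) : Prop where
  run : ∀ k, 1 ≤ k → IsRun γ w u (I k) (J k)
  mono : ∀ k, 1 ≤ k → I k < I (k + 1)
  complete : ∀ i j, IsRun γ w u i j → ∃ k, 1 ≤ k ∧ I k = i ∧ J k = j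
  j0 : J 0 = 0
  wdef : ∀ k, 1 ≤ k → W k = Subword w (J (k - 1) + 1) (I k - 1)
  zlen : ∀ k, 1 ≤ k → (Z k).length = u.length
  zpow : ∀ k, 1 ≤ k → IsPowFactor u (Z k)
  dge : ∀ k, 1 ≤ k → 1 ≤ D k
  zd : ∀ k, 1 ≤ k → Subword w (I k) (J k) = fracPow (Z k) (D k)

/-- Membership in `Φ_h` (with fixed parameter `γ`). -/
def InPhi (γ h : ℕ) (φ : ℚ → ℚ) : Prop :=
  ∀ q : ℚ, 1 ≤ q → ((γ : ℚ) - 2 ≤ φ q ∧ φ q < (h : ℚ) ∧ ∃ n : ℕ, q - φ q = (n : ℚ))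

/-- The finite prefix `W 1 (Z 1)^(E 1) ⋯ W k (Z k)^(E k)` of the reduced word. -/
def redPrefix (W Z : ℕ → List α) (E : ℕ → ℚ) : ℕ → List α
  | 0 => []
  | k + 1 => redPrefix W Z E k ++ W (k + 1) ++ fracPow (Z (k + 1)) (E (k + 1))

/-- `x` is the reduced word `W 1 (Z 1)^(E 1) W 2 (Z 2)^(E 2) ⋯` (1-indexed). -/
def IsReduce (W Z : ℕ → List α) (E : ℕ → ℚ) (x : ℕ → α) : Prop :=
  ∀ k, redPrefix W Z E k = (List.range (redPrefix W Z E k).length).map fun n => x (1 + n)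

/-- Position `i` of `w` is not covered by any `u`-run. -/
def RpoDom (γ : ℕ) (w : ℕ → α) (u : List α) (i : ℕ) : Prop :=
  1 ≤ i ∧ ∀ a b, IsRun γ w u a b → ¬ (a ≤ i ∧ i ≤ b)

/-- `κ(j) = Σ_{i ≤ j} (|W i| + |(Z i)^(D i)|)`, the end position of the `j`-th run. -/
def kappa (W Z : ℕ → List α) (D : ℕ → ℚ) (j : ℕ) : ℕ :=
  ∑ i ∈ Finset.Icc 1 j, ((W i).length + (fracPow (Z i) (D i)).length)

/-- The graph of the position bijection `rpo`: position `i` of `w` (with exponent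
sequence `D`) corresponds to position `ib` of the reduced word (exponents `E`). -/
def RpoRel (W Z : ℕ → List α) (D E : ℕ → ℚ) (i ib : ℕ) : Prop :=
  ∃ j, kappa W Z D j < i ∧ i ≤ kappa W Z D (j + 1) ∧
    ib = kappa W Z E j + (i - kappa W Z D j)

/-- There are at most `N` `u`-runs entirely contained in `[a,b]`. -/
def RunCountLe (γ : ℕ) (w : ℕ → α) (u : List α) (a b N : ℕ) : Prop :=
  ∀ S : Finset (ℕ × ℕ), (∀ p ∈ S, IsRun γ w u p.1 p.2 ∧ a ≤ p.1 ∧ p.2 ≤ b) → S.card ≤ N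

/-- `(i,j)` is a standard palindrome of `w` with respect to `u`. -/
def IsStdPal (γ : ℕ) (w : ℕ → α) (u : List α) (i j : ℕ) : Prop :=
  i ≤ j ∧ RpoDom γ w u i ∧ RpoDom γ w u j ∧
  (Subword w (i - 1) (j + 1)).reverse = Subword w (i - 1) (j + 1) ∧
  (∀ m, i - 1 ≤ m → m ≤ min (i + u.length - 1) j → RpoDom γ w u m) ∧
  (∀ m, max (j + 1 - u.length) i ≤ m → m ≤ j + 1 → RpoDom γ w u m) ∧
  (∀ m, i ≤ m → m ≤ j → (RpoDom γ w u m ↔ RpoDom γ w u (i + j - m)))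

/-- `(m1,m2)` is a centered standard palindrome of `w[i,j]`. -/
def IsCnStdPal (γ : ℕ) (w : ℕ → α) (u : List α) (i j m1 m2 : ℕ) : Prop :=
  IsStdPal γ w u m1 m2 ∧ i ≤ m1 ∧ m2 ≤ j ∧ m1 - i = j - m2

/-!
The window `w[i - |u|, j + |u|]` of a `u`-run is a factor of `u^∞` or of `(u^R)^∞`, so it has
period `|u|`, and it cannot be extended by one letter on either side. If two consecutive runs
`(i, j)`, `(i', j')` were separated by at most `|u|` letters, their windows would overlap in at
least `|u|` letters. Either `j' ≤ j`, and then the left extension of the second window lies in the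
first one; or their union has period `|u|`, and a factor of `v^∞` of length `≥ |v|` keeps being one
along a `|v|`-periodic stretch, so the first window extends to the right. The first inter-run factor
`w[1, i₁ - 1]` is long since a run starts after position `|u| + 1`.
-/

namespace List

theorem length_flatten_replicate (k : ℕ) (v : List α) :
    (replicate k v).flatten.length = k * v.length := by
  simp [length_flatten]

theorem getElem?_flatten_replicate (v : List α) {k i : ℕ} (h : i < k * v.length) :
    (replicate k v).flatten[i]? = v[i % v.length]? := by
  induction k generalizing i with
  | zero => simp at h
  | succ k ih =>
    rw [replicate_succ, flatten_cons]
    rcases Nat.lt_or_ge i v.length with hi | hi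
    · rw [getElem?_append_left hi, Nat.mod_eq_of_lt hi]
    · rw [getElem?_append_right hi, ih (by rw [Nat.succ_mul] at h; omega),
        ← Nat.mod_eq_sub_mod hi]

end List

section Subword

variable {w : ℕ → α}

theorem subword_eq_map_range' (w : ℕ → α) (a b : ℕ) :
    Subword w a b = (List.range' a (b + 1 - a)).map w := by
  rw [List.range'_eq_map_range, List.map_map]
  rfl

@[simp]
theorem length_subword (w : ℕ → α) (a b : ℕ) : (Subword w a b).length = b + 1 - a := by
  simp [Subword]

@[simp]
theorem getElem_subword (w : ℕ → α) (a b n : ℕ) (h : n < (Subword w a b).length) :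
    (Subword w a b)[n] = w (a + n) := by
  simp [Subword]

theorem subword_infix_subword {a b a' b' : ℕ} (ha : a ≤ a') (hb : b' ≤ b) :
    Subword w a' b' <:+: Subword w a b := by
  rcases Nat.lt_or_ge b' a' with h | h
  · simp [Subword, show b' + 1 - a' = 0 by omega]
  · have hsplit : List.range' a (b + 1 - a) = List.range' a (a' - a) ++
        List.range' a' (b' + 1 - a') ++ List.range' (b' + 1) (b - b') := by
      have e1 := List.range'_append_1 (s := a) (m := a' - a) (n := b' + 1 - a')
      have e2 := List.range'_append_1 (s := a) (m := b' + 1 - a) (n := b - b')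
      rw [Nat.add_sub_cancel' ha, show a' - a + (b' + 1 - a') = b' + 1 - a by omega] at e1
      rw [show a + (b' + 1 - a) = b' + 1 by omega,
        show b' + 1 - a + (b - b') = b + 1 - a by omega] at e2
      rw [e1, e2]
    rw [subword_eq_map_range', subword_eq_map_range', hsplit, List.map_append, List.map_append]
    exact List.infix_append _ _ _

theorem exists_subword_infix_iff {v : List α} (hv : v ≠ []) {a b : ℕ} :
    (∃ k, Subword w a b <:+: (List.replicate k v).flatten) ↔
      ∃ s, ∀ n, a + n ≤ b → v[(s + n) % v.length]? = some (w (a + n)) := by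
  have hp : 0 < v.length := List.length_pos_iff.mpr hv
  simp only [List.infix_iff_getElem?, length_subword, List.length_flatten_replicate,
    getElem_subword]
  constructor
  · rintro ⟨k, s, hs, hget⟩
    refine ⟨s, fun n hn => ?_⟩
    rw [← hget n (by omega), List.getElem?_flatten_replicate v (by omega), Nat.add_comm n s]
  · rintro ⟨s, hs⟩
    refine ⟨s + (b + 1 - a), s, by nlinarith, fun n hn => ?_⟩
    rw [List.getElem?_flatten_replicate v (by nlinarith), Nat.add_comm n s, hs n (by omega)]

end Subword

section Periodicity

variable {w : ℕ → α} {u v : List α} {a b c d : ℕ}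

def HasPeriodOn (w : ℕ → α) (p a b : ℕ) : Prop :=
  ∀ n, a ≤ n → n + p ≤ b → w (n + p) = w n

theorem hasPeriodOn_of_infix (h : ∃ k, Subword w a b <:+: (List.replicate k v).flatten) :
    HasPeriodOn w v.length a b := by
  rcases eq_or_ne v [] with rfl | hv
  · intro n _ _
    rfl
  obtain ⟨s, hs⟩ := (exists_subword_infix_iff hv).mp h
  intro n han hnb
  have hnext := hs (n - a + v.length) (by omega)
  rw [← Nat.add_assoc, Nat.add_mod_right, hs (n - a) (by omega),
    show a + (n - a + v.length) = n + v.length by omega, show a + (n - a) = n by omega] at hnext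
  exact (Option.some.inj hnext).symm

theorem HasPeriodOn.union {p : ℕ} (h₁ : HasPeriodOn w p a b) (h₂ : HasPeriodOn w p c d)
    (hcb : c + p ≤ b + 1) : HasPeriodOn w p a d := by
  intro n han hnd
  rcases le_or_gt (n + p) b with hnb | hnb
  · exact h₁ n han hnb
  · exact h₂ n (by omega) hnd

theorem exists_subword_infix_of_hasPeriodOn (hv : v ≠ [])
    (h : ∃ k, Subword w a b <:+: (List.replicate k v).flatten) (hlen : a + v.length ≤ b + 1)
    (hper : HasPeriodOn w v.length a d) :
    ∃ k, Subword w a d <:+: (List.replicate k v).flatten := by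
  have hp : 0 < v.length := List.length_pos_iff.mpr hv
  obtain ⟨s, hs⟩ := (exists_subword_infix_iff hv).mp h
  refine (exists_subword_infix_iff hv).mpr ⟨s, fun n hnd => ?_⟩
  induction n using Nat.strong_induction_on with
  | _ n ih =>
    rcases le_or_gt (a + n) b with hnb | hnb
    · exact hs n hnb
    · obtain ⟨m, rfl⟩ : ∃ m, n = m + v.length := ⟨n - v.length, by omega⟩
      rw [← Nat.add_assoc, Nat.add_mod_right, ih m (by omega) (by omega), ← Nat.add_assoc,
        hper (a + m) (by omega) (by omega)]

theorem IsPowFactor.mono {s t : List α} (h : IsPowFactor u s) (hts : t <:+: s) :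
    IsPowFactor u t :=
  h.imp (fun ⟨k, hk⟩ => ⟨k, hts.trans hk⟩) (fun ⟨k, hk⟩ => ⟨k, hts.trans hk⟩)

theorem IsPowFactor.hasPeriodOn (h : IsPowFactor u (Subword w a b)) :
    HasPeriodOn w u.length a b := by
  rcases h with h | h
  · exact hasPeriodOn_of_infix h
  · simpa using hasPeriodOn_of_infix h

theorem IsPowFactor.extend (hu : u ≠ []) (h : IsPowFactor u (Subword w a b))
    (hlen : a + u.length ≤ b + 1) (hper : HasPeriodOn w u.length a d) :
    IsPowFactor u (Subword w a d) := by
  rcases h with h | h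
  · exact .inl (exists_subword_infix_of_hasPeriodOn hu h hlen hper)
  · refine .inr (exists_subword_infix_of_hasPeriodOn (by simpa) h ?_ ?_) <;> simpa

end Periodicity

theorem IsRun.add_length_add_one_lt {γ : ℕ} {w : ℕ → α} {u : List α} {i j i' j' : ℕ}
    (hu : u ≠ []) (h : IsRun γ w u i j) (h' : IsRun γ w u i' j') (hii' : i < i') :
    j + u.length + 1 < i' := by
  obtain ⟨hij, -, -, hpow, -, hright⟩ := h
  obtain ⟨-, -, hi', hpow', hleft', -⟩ := h'
  by_contra! hclose
  rcases le_or_gt j' j with hj | hj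
  · exact hleft' (hpow.mono (subword_infix_subword (by omega) (by omega)))
  · have hper := hpow.hasPeriodOn.union hpow'.hasPeriodOn (by omega)
    exact hright ((hpow.extend hu (by omega) hper).mono (subword_infix_subword le_rfl (by omega)))

theorem interrun_factor_long_general {α : Type*} (γ : ℕ) (w : ℕ → α)
    (u : List α) (hu : InPi γ w u)
    (I J : ℕ → ℕ) (W Z : ℕ → List α) (D : ℕ → ℚ)
    (hf : IsFactrz γ w u I J W Z D) :
    ∀ k, 1 ≤ k → u.length < (W k).length := by
  rintro (_ | m) hk
  · omega
  have hW : (W (m + 1)).length = I (m + 1) - 1 + 1 - (J m + 1) := by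
    rw [hf.wdef _ hk, length_subword, Nat.add_sub_cancel]
  obtain ⟨-, -, hI, -⟩ := hf.run _ hk
  rcases Nat.eq_zero_or_pos m with rfl | hm
  · rw [hf.j0] at hW
    omega
  · have := (hf.run m hm).add_length_add_one_lt hu.1.1 (hf.run _ hk) (hf.mono m hm)
    omega

/-- every inter-run factor of the run factorization is longer than `u`. -/
theorem interrun_factor_long {α : Type*} (γ : ℕ) (hγ : 3 ≤ γ) (w : ℕ → α)
    (u : List α) (hw : ¬ UltimatelyPeriodic w) (hu : InPi γ w u)
    (I J : ℕ → ℕ) (W Z : ℕ → List α) (D : ℕ → ℚ)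
    (hf : IsFactrz γ w u I J W Z D) :
    ∀ k, 1 ≤ k → u.length < (W k).length :=
  interrun_factor_long_general γ w u hu I J W Z D hf
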